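/- arXiv:1805.04100 — 2 statements merged into one kernel-verified Lean document; each statement's English description precedes it below -/
import Mathlib

section
/- Every map P : X → Y of semi-simplicial spaces can be factored as a level equivalence X → X^f followed by a Reedy fibration X^f → Y. -/
open scoped unitInterval Topology.Homotopy

noncomputable section LTGCore

universe u v w

/-! ### Core homotopy-theoretic notions -/

/-- The induced map on path components. -/
def pi0Map {X : Type u} {Y : Type v} [TopologicalSpace X] [TopologicalSpace Y]
    (f : X → Y) (hf : Continuous f) : ZerothHomotopy X → ZerothHomotopy Y :=
  Quotient.map f (fun _ _ h => h.elim (fun γ => ⟨γ.map hf⟩))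

/-- Post-composition of a generalized loop with a continuous map. -/
def GenLoop.push {X : Type u} {Y : Type v} [TopologicalSpace X] [TopologicalSpace Y]
    {N : Type} (f : C(X, Y)) {x : X} (g : GenLoop N X x) : GenLoop N Y (f x) :=
  ⟨f.comp g.1, fun y hy => by
    have := g.2 y hy
    simp [this]⟩

/-- The induced map on homotopy groups $\pi_n$ (for the cube indexed by `N`). -/
def homotopyGroupMap {X : Type u} {Y : Type v} [TopologicalSpace X] [TopologicalSpace Y]
    (N : Type) (f : C(X, Y)) (x : X) :
    HomotopyGroup N X x → HomotopyGroup N Y (f x) :=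
  Quotient.map (GenLoop.push f)
    (fun g h H => by
      obtain ⟨K⟩ := H
      exact ⟨{ toHomotopy := (ContinuousMap.Homotopy.refl f).comp K.toHomotopy
               prop' := fun t y hy => by
                  have h1 : K (t, y) = g.1 y := K.prop t y hy
                  show f (K (t, y)) = f (g.1 y)
                  rw [h1] }⟩)

/-- A continuous map is a weak homotopy equivalence if it induces a bijection on path
components and on all homotopy groups with arbitrary base points. -/
def IsWeakHomotopyEquiv {X : Type u} {Y : Type v} [TopologicalSpace X] [TopologicalSpace Y]
    (f : X → Y) : Prop :=
  ∃ hf : Continuous f,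
    Function.Bijective (pi0Map f hf) ∧
    ∀ (n : ℕ) (x : X), Function.Bijective (homotopyGroupMap (Fin n) ⟨f, hf⟩ x)

/-- The standard (mapping path space) homotopy pullback of two maps `f : A → C`, `g : B → C`. -/
def StdHomotopyPullback {A : Type u} {B : Type v} {C : Type w}
    [TopologicalSpace A] [TopologicalSpace B] [TopologicalSpace C]
    (f : A → C) (g : B → C) : Type (max u v w) :=
  { x : A × B × C(I, C) // x.2.2 0 = f x.1 ∧ x.2.2 1 = g x.2.1 }

instance {A : Type u} {B : Type v} {C : Type w}
    [TopologicalSpace A] [TopologicalSpace B] [TopologicalSpace C]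
    (f : A → C) (g : B → C) : TopologicalSpace (StdHomotopyPullback f g) :=
  instTopologicalSpaceSubtype

/-- The canonical comparison map from the corner of a strictly commutative square to the
standard homotopy pullback. -/
def homotopyPullbackCompare {W : Type*} {A : Type u} {B : Type v} {C : Type w}
    [TopologicalSpace W] [TopologicalSpace A] [TopologicalSpace B] [TopologicalSpace C]
    (f : A → C) (g : B → C) (p : W → A) (q : W → B)
    (hcomm : ∀ w, f (p w) = g (q w)) (w : W) : StdHomotopyPullback f g :=
  ⟨(p w, q w, ContinuousMap.const I (f (p w))), rfl, by simpa using hcomm w⟩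

/-- A strictly commutative square of spaces (`f ∘ p = g ∘ q`, with `W` the initial corner)
is a homotopy pullback if the canonical comparison map from `W` to the standard homotopy
pullback of `f` and `g` is a weak homotopy equivalence. -/
def IsHomotopyPullback {W : Type*} {A : Type u} {B : Type v} {C : Type w}
    [TopologicalSpace W] [TopologicalSpace A] [TopologicalSpace B] [TopologicalSpace C]
    (f : A → C) (g : B → C) (p : W → A) (q : W → B) : Prop :=
  Continuous p ∧ Continuous q ∧
  ∃ hcomm : ∀ w, f (p w) = g (q w),
    IsWeakHomotopyEquiv (homotopyPullbackCompare f g p q hcomm)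

/-- The standard homotopy fiber of `g : B → C` over `c₀ : C`. -/
def StdHomotopyFiber {B : Type v} {C : Type w} [TopologicalSpace B] [TopologicalSpace C]
    (g : B → C) (c₀ : C) : Type (max v w) :=
  { x : B × C(I, C) // x.2 0 = g x.1 ∧ x.2 1 = c₀ }

instance {B : Type v} {C : Type w} [TopologicalSpace B] [TopologicalSpace C]
    (g : B → C) (c₀ : C) : TopologicalSpace (StdHomotopyFiber g c₀) :=
  instTopologicalSpaceSubtype

/-- The comparison map into the standard homotopy fiber determined by a homotopy `H`
witnessing that `g ∘ i` is homotopic to the constant map at `c₀`. -/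
def homotopyFiberCompare {A : Type u} {B : Type v} {C : Type w}
    [TopologicalSpace A] [TopologicalSpace B] [TopologicalSpace C]
    (i : A → B) (g : B → C) (c₀ : C) (H : C(A × I, C))
    (h0 : ∀ a, H (a, 0) = g (i a)) (h1 : ∀ a, H (a, 1) = c₀) (a : A) :
    StdHomotopyFiber g c₀ :=
  ⟨(i a, H.curry a), by simpa using h0 a, by simpa using h1 a⟩

/-- `A --i--> B --g--> C` is a homotopy fibration sequence over the point `c₀ : C` if
there is a homotopy from `g ∘ i` to the constant map at `c₀` for which the induced
comparison map from `A` to the standard homotopy fiber of `g` over `c₀` is a weak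
homotopy equivalence. -/
def IsHomotopyFiberSequence {A : Type u} {B : Type v} {C : Type w}
    [TopologicalSpace A] [TopologicalSpace B] [TopologicalSpace C]
    (i : A → B) (g : B → C) (c₀ : C) : Prop :=
  Continuous i ∧ Continuous g ∧
  ∃ (H : C(A × I, C)) (h0 : ∀ a, H (a, 0) = g (i a)) (h1 : ∀ a, H (a, 1) = c₀),
    IsWeakHomotopyEquiv (homotopyFiberCompare i g c₀ H h0 h1)

/-- A map is a Serre fibration if it has the homotopy lifting property with respect to
all cubes. -/
def IsSerreFibration {X : Type u} {Y : Type v} [TopologicalSpace X] [TopologicalSpace Y]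
    (f : X → Y) : Prop :=
  Continuous f ∧
  ∀ (n : ℕ) (H : C((Fin n → I) × I, Y)) (h : C(Fin n → I, X)),
    (∀ a, f (h a) = H (a, 0)) →
    ∃ G : C((Fin n → I) × I, X), (∀ a, G (a, 0) = h a) ∧ ∀ z, f (G z) = H z

/-- A map is surjective on path components. -/
def SurjOnPi0 {X : Type u} {Y : Type v} [TopologicalSpace X] [TopologicalSpace Y]
    (f : X → Y) : Prop :=
  ∀ y : Y, ∃ x : X, Joined (f x) y

end LTGCore

/-! ### Semi-simplicial spaces -/

noncomputable section SemiSimp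

open CategoryTheory

/-- The semi-simplex category: objects are natural numbers (standing for the finite linear
orders `{0,...,n}`), morphisms are strictly monotone (i.e. injective monotone) maps. -/
structure SemiSimplexCat where
  /-- the dimension -/
  len : ℕ

namespace SemiSimplexCat

@[simp]
lemma mk_len (n : ℕ) : (SemiSimplexCat.mk n).len = n := rfl

/-- Morphisms of the semi-simplex category: strictly monotone maps. -/
@[ext]
structure Hom (m n : SemiSimplexCat) where
  /-- the underlying function -/
  toFun : Fin (m.len + 1) → Fin (n.len + 1)
  strictMono : StrictMono toFun

instance : Category SemiSimplexCat where
  Hom := Hom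
  id m := ⟨id, strictMono_id⟩
  comp f g := ⟨g.toFun ∘ f.toFun, g.strictMono.comp f.strictMono⟩

lemma hom_ext {m n : SemiSimplexCat} (f g : m ⟶ n) (h : f.toFun = g.toFun) : f = g :=
  Hom.ext h

/-- The vertex `k`, as a morphism `[0] → [n]`. -/
def vertexHom (n : ℕ) (k : Fin (n + 1)) : (⟨0⟩ : SemiSimplexCat) ⟶ ⟨n⟩ :=
  ⟨fun _ => k, fun a b hab => by
    have ha := a.isLt
    have hb := b.isLt
    rw [Fin.lt_def] at hab
    simp only [mk_len] at ha hb
    omega⟩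

/-- The edge `{k, k+1}`, as a morphism `[1] → [n]`. -/
def edgeHom (n : ℕ) (k : ℕ) (h : k + 1 ≤ n) : (⟨1⟩ : SemiSimplexCat) ⟶ ⟨n⟩ :=
  ⟨fun i => ⟨k + i, by have := i.isLt; simp only [mk_len] at *; omega⟩, fun a b hab => by
    rw [Fin.lt_def] at hab
    simp only [Fin.mk_lt_mk]
    omega⟩

/-- The inclusion of the last `k`-dimensional face, as a morphism `[k] → [n]`. -/
def lastFaceHom (k n : ℕ) (h : k ≤ n) : (⟨k⟩ : SemiSimplexCat) ⟶ ⟨n⟩ :=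
  ⟨fun i => ⟨n - k + i, by have := i.isLt; simp only [mk_len] at *; omega⟩, fun a b hab => by
    rw [Fin.lt_def] at hab
    simp only [Fin.mk_lt_mk]
    omega⟩

/-- The middle face `[1] → [2]` hitting the vertices `0` and `2`. -/
def middleFaceHom : (⟨1⟩ : SemiSimplexCat) ⟶ ⟨2⟩ :=
  ⟨fun i => ⟨2 * i, by have := i.isLt; simp only [mk_len] at *; omega⟩, fun a b hab => by
    rw [Fin.lt_def] at hab
    simp only [Fin.mk_lt_mk]
    omega⟩

/-- The order-reversal endofunctor of the semi-simplex category. -/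
def revFunctor : SemiSimplexCat ⥤ SemiSimplexCat where
  obj n := n
  map {m n} f := ⟨fun i => (f.toFun i.rev).rev, fun a b hab => by
    simp only [Fin.rev_lt_rev]
    exact f.strictMono (by simpa using hab)⟩
  map_id n := by
    apply hom_ext
    funext i
    show (i.rev).rev = i
    exact Fin.rev_rev i
  map_comp f g := by
    apply hom_ext
    funext i
    show ((g.toFun (f.toFun i.rev)).rev : Fin _) =
      (g.toFun (((f.toFun i.rev).rev).rev)).rev
    rw [Fin.rev_rev]

end SemiSimplexCat

/-- A semi-simplicial space: a contravariant functor from the semi-simplex category to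
topological spaces. -/
abbrev SemiSimplicialSpace : Type (u + 1) :=
  SemiSimplexCatᵒᵖ ⥤ TopCat.{u}

namespace SemiSimplicialSpace

open SemiSimplexCat Opposite

variable (X Y : SemiSimplicialSpace.{u})

/-- The space of `n`-simplices. -/
abbrev sp (n : ℕ) : TopCat := X.obj (op ⟨n⟩)

variable {X Y}

lemma map_map {a b c : SemiSimplexCat} (α : a ⟶ b) (β : b ⟶ c) (x : X.obj (op c)) :
    X.map α.op (X.map β.op x) = X.map (α ≫ β).op x := by
  have h : X.map (α ≫ β).op = X.map β.op ≫ X.map α.op := by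
    rw [← X.map_comp]
    rfl
  rw [h, TopCat.comp_app]

lemma natApp {C : Type} [Category C] {X Y : C ⥤ TopCat} (F : X ⟶ Y) {m₁ m₂ : C}
    (φ : m₁ ⟶ m₂) (x : X.obj m₁) :
    F.app m₂ (X.map φ x) = Y.map φ (F.app m₁ x) := by
  have h := ConcreteCategory.congr_hom (F.naturality φ) x
  rw [TopCat.comp_app, TopCat.comp_app] at h
  exact h

lemma naturality_apply (P : X ⟶ Y) {a b : SemiSimplexCat} (α : a ⟶ b) (x : X.obj (op b)) :
    P.app (op a) (X.map α.op x) = Y.map α.op (P.app (op b) x) :=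
  natApp P α.op x

/-- The terminal semi-simplicial space. -/
def terminal : SemiSimplicialSpace.{u} :=
  (Functor.const _).obj (TopCat.of PUnit)

/-- The unique map to the terminal semi-simplicial space. -/
def toTerminal (X : SemiSimplicialSpace.{u}) : X ⟶ terminal where
  app _ := TopCat.ofHom ⟨fun _ => PUnit.unit, continuous_const⟩
  naturality _ _ _ := by
    apply TopCat.ext
    intro x
    rfl

/-- A map of semi-simplicial spaces is a level equivalence if it is a weak homotopy
equivalence in every degree. -/
def IsLevelEquiv (P : X ⟶ Y) : Prop :=
  ∀ n : ℕ, IsWeakHomotopyEquiv (P.app (op ⟨n⟩))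

/-- A map of semi-simplicial spaces is a level fibration if it is a Serre fibration in
every degree. -/
def IsLevelFibration (P : X ⟶ Y) : Prop :=
  ∀ n : ℕ, IsSerreFibration (P.app (op ⟨n⟩))

/-! #### The Segal condition -/

/-- The `n`-fold iterated homotopy pullback `X₁ ×ʰ_{X₀} ⋯ ×ʰ_{X₀} X₁`: the space of chains
of `n` edges together with paths connecting the target vertex of each edge to the source
vertex of the following one. -/
def SpineSpace (X : SemiSimplicialSpace.{u}) (n : ℕ) : Type u :=
  { z : (Fin n → X.obj (op ⟨1⟩)) × (Fin (n - 1) → C(unitInterval, X.obj (op ⟨0⟩))) //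
      ∀ i : Fin (n - 1),
        (z.2 i) 0 = X.map (vertexHom 1 1).op (z.1 ⟨i, by omega⟩) ∧
        (z.2 i) 1 = X.map (vertexHom 1 0).op (z.1 ⟨(i : ℕ) + 1, by omega⟩) }

instance (n : ℕ) : TopologicalSpace (SpineSpace X n) :=
  instTopologicalSpaceSubtype

lemma vertex_edge_comp₀ (n k : ℕ) (h : k + 1 ≤ n) :
    vertexHom 1 0 ≫ edgeHom n k h = vertexHom n ⟨k, by omega⟩ := by
  apply SemiSimplexCat.hom_ext
  funext i
  apply Fin.ext
  show k + ((0 : Fin 2) : ℕ) = k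
  simp

lemma vertex_edge_comp₁ (n k : ℕ) (h : k + 1 ≤ n) :
    vertexHom 1 1 ≫ edgeHom n k h = vertexHom n ⟨k + 1, by omega⟩ := by
  apply SemiSimplexCat.hom_ext
  funext i
  apply Fin.ext
  show k + ((1 : Fin 2) : ℕ) = k + 1
  simp

/-- The Segal map, sending an `n`-simplex to its spine (with constant connecting paths). -/
def segalMap (X : SemiSimplicialSpace.{u}) (n : ℕ) :
    X.obj (op ⟨n⟩) → SpineSpace X n := fun x =>
  ⟨(fun i => X.map (edgeHom n i (by omega)).op x,
    fun i => ContinuousMap.const _ (X.map (vertexHom n ⟨(i : ℕ) + 1, by omega⟩).op x)),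
   fun i => by
    constructor
    · show X.map (vertexHom n _).op x = X.map (vertexHom 1 1).op (X.map (edgeHom n i (by omega)).op x)
      rw [map_map, vertex_edge_comp₁]
    · show X.map (vertexHom n _).op x = X.map (vertexHom 1 0).op
        (X.map (edgeHom n ((i : ℕ) + 1) (by omega)).op x)
      rw [map_map, vertex_edge_comp₀]⟩

/-- A semi-Segal space: a semi-simplicial space for which all Segal maps are weak
homotopy equivalences. -/
def IsSemiSegal (X : SemiSimplicialSpace.{u}) : Prop :=
  ∀ n : ℕ, 1 ≤ n → IsWeakHomotopyEquiv (segalMap X n)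

/-! #### Cartesian 1-simplices -/

/-- `Cₙ/s0`: the homotopy fiber, over the `k`-simplex `s0`, of the map `Cₙ → C_k` taking the
last `k`-dimensional face. -/
def simplexOver (X : SemiSimplicialSpace.{u}) {k n : ℕ} (h : k ≤ n) (s0 : X.obj (op ⟨k⟩)) :
    Type u :=
  StdHomotopyFiber (fun x : X.obj (op ⟨n⟩) => X.map (lastFaceHom k n h).op x) s0

instance {k n : ℕ} (h : k ≤ n) (s0 : X.obj (op ⟨k⟩)) : TopologicalSpace (simplexOver X h s0) :=
  instTopologicalSpaceSubtype

/-- The map `C₂/f → C₁/d` induced by the face `d₁`. -/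
def overD1Map (X : SemiSimplicialSpace.{u}) (f : X.obj (op ⟨1⟩)) (d : X.obj (op ⟨0⟩))
    (hd : X.map (vertexHom 1 1).op f = d) :
    simplexOver X (show 1 ≤ 2 by omega) f → simplexOver X (show 0 ≤ 1 by omega) d :=
  fun z =>
    ⟨(X.map middleFaceHom.op z.1.1,
      (ContinuousMap.comp (X.map (vertexHom 1 1).op).hom z.1.2 : C(unitInterval, _))),
     by
      have h0 := z.2.1
      have h1 := z.2.2
      constructor
      · show X.map (vertexHom 1 1).op (z.1.2 0) = _
        dsimp only
        rw [h0]
        dsimp only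
        rw [map_map, map_map]
        have e : vertexHom 1 1 ≫ lastFaceHom 1 2 (by omega)
            = lastFaceHom 0 1 (by omega) ≫ middleFaceHom := by
          apply SemiSimplexCat.hom_ext
          funext i
          fin_cases i
          rfl
        rw [e]
      · show X.map (vertexHom 1 1).op (z.1.2 1) = d
        rw [h1, hd]⟩

/-- The map `Cₙ/s0 → Dₙ/P(s0)` induced by a map of semi-simplicial spaces. -/
def overPMap (P : X ⟶ Y) {k n : ℕ} (h : k ≤ n) (s0 : X.obj (op ⟨k⟩)) :
    simplexOver X h s0 → simplexOver Y h (P.app (op ⟨k⟩) s0) :=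
  fun z =>
    ⟨(P.app (op ⟨n⟩) z.1.1,
      (ContinuousMap.comp (P.app (op ⟨k⟩)).hom z.1.2 : C(unitInterval, _))),
     by
      constructor
      · show P.app _ (z.1.2 0) = Y.map (lastFaceHom k n h).op (P.app _ z.1.1)
        rw [z.2.1, naturality_apply]
      · show P.app _ (z.1.2 1) = P.app _ s0
        rw [z.2.2]⟩

/-- A 1-simplex `f` of `X` is `P`-cartesian if the square
`C₂/f → C₁/d₀(f)`, `D₂/P(f) → D₁/d₀(P f)` (vertical maps induced by `P`, horizontal maps by
the face `d₁`) is a homotopy pullback. -/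
def IsSegalCartesian (P : X ⟶ Y) (f : X.obj (op ⟨1⟩)) : Prop :=
  IsHomotopyPullback
    (overPMap P (show 0 ≤ 1 by omega) (X.map (vertexHom 1 1).op f))
    (overD1Map Y (P.app (op ⟨1⟩) f) (P.app (op ⟨0⟩) (X.map (vertexHom 1 1).op f))
      (naturality_apply P (vertexHom 1 1) f).symm)
    (overD1Map X f (X.map (vertexHom 1 1).op f) rfl)
    (overPMap P (show 1 ≤ 2 by omega) f)

/-- The comparison map `X₁^{P-cart} → Y₁ ×ʰ_{Y₀} X₀`, sending a cartesian edge `f` to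
`(P f, d₀ f)` (with a constant connecting path). -/
def segalCartesianCompare (P : X ⟶ Y) :
    { f : X.obj (op ⟨1⟩) // IsSegalCartesian P f } →
      StdHomotopyPullback
        (fun y : Y.obj (op ⟨1⟩) => Y.map (vertexHom 1 1).op y)
        (fun c : X.obj (op ⟨0⟩) => P.app (op ⟨0⟩) c) :=
  fun f =>
    ⟨(P.app (op ⟨1⟩) f.1, X.map (vertexHom 1 1).op f.1,
      ContinuousMap.const _ (Y.map (vertexHom 1 1).op (P.app (op ⟨1⟩) f.1))),
     rfl, by
      show Y.map (vertexHom 1 1).op (P.app (op ⟨1⟩) f.1) = _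
      rw [← naturality_apply]⟩

/-- `P` is a cartesian fibration of semi-Segal spaces if the comparison map
`(P, d₀) : X₁^{P-cart} → Y₁ ×ʰ_{Y₀} X₀` is surjective on `π₀`. -/
def IsSegalCartesianFibration (P : X ⟶ Y) : Prop :=
  SurjOnPi0 (segalCartesianCompare P)

/-- The opposite of a semi-simplicial space. -/
def opp (X : SemiSimplicialSpace.{u}) : SemiSimplicialSpace.{u} :=
  revFunctor.op ⋙ X

/-- The map induced on opposite semi-simplicial spaces. -/
def oppMap (P : X ⟶ Y) : opp X ⟶ opp Y :=
  CategoryTheory.Functor.whiskerLeft revFunctor.op P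

/-- `f` is `P`-cocartesian if it is cartesian for the induced map of opposite
semi-simplicial spaces. -/
def IsSegalCocartesian (P : X ⟶ Y) (f : X.obj (op ⟨1⟩)) : Prop :=
  IsSegalCartesian (oppMap P) (f : (opp X).obj (op ⟨1⟩))

/-- `P` is a cocartesian fibration of semi-Segal spaces if `Pᵒᵖ` is a cartesian
fibration. -/
def IsSegalCocartesianFibration (P : X ⟶ Y) : Prop :=
  IsSegalCartesianFibration (oppMap P)

/-- A 1-simplex is an equivalence if it is both cartesian and cocartesian for the unique
map to the terminal semi-simplicial space. -/
def IsSegalEquivalence (X : SemiSimplicialSpace.{u}) (f : X.obj (op ⟨1⟩)) : Prop :=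
  IsSegalCartesian (toTerminal X) f ∧ IsSegalCocartesian (toTerminal X) f

/-- A semi-Segal space is weakly unital if the target map
`d₀ : X₁^{≃} → X₀` is surjective on `π₀`. -/
def IsWeaklyUnital (X : SemiSimplicialSpace.{u}) : Prop :=
  SurjOnPi0 (fun f : { f : X.obj (op ⟨1⟩) // IsSegalEquivalence X f } =>
    X.map (vertexHom 1 1).op f.1)

/-- A map of weakly unital semi-Segal spaces is weakly unital if it preserves
equivalences. -/
def IsWeaklyUnitalMap (P : X ⟶ Y) : Prop :=
  ∀ f : X.obj (op ⟨1⟩), IsSegalEquivalence X f → IsSegalEquivalence Y (P.app (op ⟨1⟩) f)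

/-! #### Level-wise (homotopy) pullbacks -/

/-- The level-wise strict pullback of a cospan `D' --F--> D <--P-- C` of semi-simplicial
spaces. -/
def ssPullback {C D D' : SemiSimplicialSpace.{u}} (F : D' ⟶ D) (P : C ⟶ D) :
    SemiSimplicialSpace.{u} where
  obj m := TopCat.of { z : D'.obj m × C.obj m // F.app m z.1 = P.app m z.2 }
  map {m₁ m₂} φ :=
    TopCat.ofHom ⟨fun z => ⟨(D'.map φ z.1.1, C.map φ z.1.2), by
        have h1 := natApp F φ z.1.1
        have h2 := natApp P φ z.1.2
        dsimp only
        rw [h1, h2, z.2]⟩,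
     by
      apply Continuous.subtype_mk
      exact ((D'.map φ).hom.continuous.comp (continuous_fst.comp continuous_subtype_val)).prodMk
        ((C.map φ).hom.continuous.comp (continuous_snd.comp continuous_subtype_val))⟩
  map_id m := by
    apply TopCat.ext
    intro z
    apply Subtype.ext
    dsimp
    rw [Prod.ext_iff]
    constructor
    · exact ConcreteCategory.congr_hom (D'.map_id m) z.1.1
    · exact ConcreteCategory.congr_hom (C.map_id m) z.1.2
  map_comp {m₁ m₂ m₃} φ ψ := by
    apply TopCat.ext
    intro z
    apply Subtype.ext
    dsimp
    rw [Prod.ext_iff]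
    constructor
    · exact ConcreteCategory.congr_hom (D'.map_comp φ ψ) z.1.1
    · exact ConcreteCategory.congr_hom (C.map_comp φ ψ) z.1.2

/-- First projection of the level-wise pullback. -/
def ssPullbackFst {C D D' : SemiSimplicialSpace.{u}} (F : D' ⟶ D) (P : C ⟶ D) :
    ssPullback F P ⟶ D' where
  app m := TopCat.ofHom ⟨fun z => z.1.1, (continuous_fst.comp continuous_subtype_val)⟩
  naturality m₁ m₂ φ := by
    apply TopCat.ext
    intro z
    rfl

/-- Second projection of the level-wise pullback. -/
def ssPullbackSnd {C D D' : SemiSimplicialSpace.{u}} (F : D' ⟶ D) (P : C ⟶ D) :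
    ssPullback F P ⟶ C where
  app m := TopCat.ofHom ⟨fun z => z.1.2, (continuous_snd.comp continuous_subtype_val)⟩
  naturality m₁ m₂ φ := by
    apply TopCat.ext
    intro z
    rfl

/-! #### Geometric realization -/

/-- The standard topological `n`-simplex. -/
def TopSimplex (n : ℕ) : Type :=
  { f : Fin (n + 1) → NNReal // ∑ i, f i = 1 }

instance (n : ℕ) : TopologicalSpace (TopSimplex n) :=
  instTopologicalSpaceSubtype

/-- The affine map of topological simplices induced by a morphism of the semi-simplex
category. -/
def TopSimplex.push {m n : SemiSimplexCat} (α : m ⟶ n) (t : TopSimplex m.len) :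
    TopSimplex n.len :=
  ⟨fun j => ∑ i ∈ Finset.univ.filter (fun i => α.toFun i = j), t.1 i, by
    rw [Finset.sum_fiberwise Finset.univ α.toFun t.1]
    exact t.2⟩

lemma TopSimplex.continuous_push {m n : SemiSimplexCat} (α : m ⟶ n) :
    Continuous (TopSimplex.push α) := by
  apply Continuous.subtype_mk
  apply continuous_pi
  intro j
  exact continuous_finset_sum _ fun i _ => (continuous_apply i).comp continuous_subtype_val

/-- The relation generating the geometric realization of a semi-simplicial space. -/
def realizationRel (X : SemiSimplicialSpace.{u}) :
    (Σ n : ℕ, X.obj (op ⟨n⟩) × TopSimplex n) → (Σ n : ℕ, X.obj (op ⟨n⟩) × TopSimplex n) →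
      Prop :=
  fun a b => ∃ (m n : ℕ) (α : (⟨m⟩ : SemiSimplexCat) ⟶ ⟨n⟩) (x : X.obj (op ⟨n⟩))
    (t : TopSimplex m),
      a = ⟨m, (X.map α.op x, t)⟩ ∧ b = ⟨n, (x, TopSimplex.push α t)⟩

/-- The geometric realization of a semi-simplicial space. -/
def Realization (X : SemiSimplicialSpace.{u}) : Type u :=
  Quot (realizationRel X)

instance (X : SemiSimplicialSpace.{u}) : TopologicalSpace (Realization X) := by
  unfold Realization
  infer_instance

/-- The map of geometric realizations induced by a map of semi-simplicial spaces. -/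
def Realization.map {X Y : SemiSimplicialSpace.{u}} (P : X ⟶ Y) :
    Realization X → Realization Y :=
  Quot.lift (fun a => Quot.mk _ ⟨a.1, (P.app (op ⟨a.1⟩) a.2.1, a.2.2)⟩)
    (by
      rintro a b ⟨m, n, α, x, t, rfl, rfl⟩
      exact Quot.sound ⟨m, n, α, P.app (op ⟨n⟩) x, t, by
        dsimp
        rw [naturality_apply], rfl⟩)

lemma Realization.continuous_map {X Y : SemiSimplicialSpace.{u}} (P : X ⟶ Y) :
    Continuous (Realization.map P) := by
  apply continuous_quot_lift
  apply continuous_sigma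
  intro n
  exact continuous_quot_mk.comp (continuous_sigmaMk.comp
    (((P.app (op ⟨n⟩)).hom.continuous.comp continuous_fst).prodMk continuous_snd))

/-- The inclusion of a point of `X₀` into the realization. -/
def Realization.pt {X : SemiSimplicialSpace.{u}} (x : X.obj (op ⟨0⟩)) : Realization X :=
  Quot.mk _ ⟨0, (x, ⟨fun _ => 1, by simp⟩)⟩

end SemiSimplicialSpace

end SemiSimp

/-! ### Reedy fibrations of semi-simplicial spaces -/

noncomputable section ReedyBlock

open CategoryTheory SemiSimplexCat Opposite SemiSimplicialSpace

namespace SemiSimplicialSpace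

variable {X Y : SemiSimplicialSpace.{u}}

/-- The index type of proper faces of the `n`-simplex. -/
def FaceIndex (n : ℕ) : Type :=
  { p : Σ m : ℕ, ((⟨m⟩ : SemiSimplexCat) ⟶ ⟨n⟩) // p.1 < n }

/-- The matching object `X_{∂[n]}`: compatible families of proper faces. -/
def MatchingObj (X : SemiSimplicialSpace.{u}) (n : ℕ) : Type u :=
  { uu : ∀ p : FaceIndex n, X.obj (op ⟨p.1.1⟩) //
      ∀ (p : FaceIndex n) (k : ℕ) (β : (⟨k⟩ : SemiSimplexCat) ⟶ ⟨p.1.1⟩) (hk : k < n),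
        X.map β.op (uu p) = uu ⟨⟨k, β ≫ p.1.2⟩, hk⟩ }

instance (n : ℕ) : TopologicalSpace (MatchingObj X n) :=
  instTopologicalSpaceSubtype

/-- The map of matching objects induced by a map of semi-simplicial spaces. -/
def matchingMap (P : X ⟶ Y) (n : ℕ) : MatchingObj X n → MatchingObj Y n := fun uu =>
  ⟨fun p => P.app (op ⟨p.1.1⟩) (uu.1 p), fun p k β hk => by
    rw [← naturality_apply P β (uu.1 p), uu.2 p k β hk]⟩

/-- The canonical family of proper faces of an `n`-simplex. -/
def canonicalMatching (X : SemiSimplicialSpace.{u}) (n : ℕ) (x : X.obj (op ⟨n⟩)) :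
    MatchingObj X n :=
  ⟨fun p => X.map p.1.2.op x, fun p k β hk => by rw [map_map]⟩

/-- The target `Yₙ ×_{Y_{∂[n]}} X_{∂[n]}` of the `n`-th Reedy comparison map. -/
def ReedyTarget (P : X ⟶ Y) (n : ℕ) : Type u :=
  { z : Y.obj (op ⟨n⟩) × MatchingObj X n //
      matchingMap P n z.2 = canonicalMatching Y n z.1 }

instance (P : X ⟶ Y) (n : ℕ) : TopologicalSpace (ReedyTarget P n) :=
  instTopologicalSpaceSubtype

/-- The `n`-th Reedy comparison map `Xₙ → Yₙ ×_{Y_{∂[n]}} X_{∂[n]}`. -/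
def reedyCompare (P : X ⟶ Y) (n : ℕ) : X.obj (op ⟨n⟩) → ReedyTarget P n := fun x =>
  ⟨(P.app (op ⟨n⟩) x, canonicalMatching X n x), by
    apply Subtype.ext
    funext p
    exact naturality_apply P p.1.2 x⟩

/-- A map of semi-simplicial spaces is a Reedy fibration if all its Reedy comparison maps
are Serre fibrations. -/
def IsReedyFibration (P : X ⟶ Y) : Prop :=
  ∀ n : ℕ, IsSerreFibration (reedyCompare P n)

/-- A semi-simplicial space is Reedy fibrant if its map to the terminal object is a Reedy
fibration. -/
def IsReedyFibrant (X : SemiSimplicialSpace.{u}) : Prop :=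
  IsReedyFibration (toTerminal X)

/-- The level-wise homotopy pullback of a cospan of semi-simplicial spaces. -/
def ssHomotopyPullback {C D D' : SemiSimplicialSpace.{u}} (F : D' ⟶ D) (P : C ⟶ D) :
    SemiSimplicialSpace.{u} where
  obj m := TopCat.of (StdHomotopyPullback
    (fun d' : D'.obj m => F.app m d') (fun c : C.obj m => P.app m c))
  map {m₁ m₂} φ :=
    TopCat.ofHom ⟨fun z => ⟨(D'.map φ z.1.1, C.map φ z.1.2.1, (D.map φ).hom.comp z.1.2.2), by
        constructor
        · show D.map φ (z.1.2.2 0) = F.app m₂ (D'.map φ z.1.1)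
          rw [z.2.1, natApp F φ]
        · show D.map φ (z.1.2.2 1) = P.app m₂ (C.map φ z.1.2.1)
          rw [z.2.2, natApp P φ]⟩,
     by
      apply Continuous.subtype_mk
      refine ((D'.map φ).hom.continuous.comp
        (continuous_fst.comp continuous_subtype_val)).prodMk (Continuous.prodMk ?_ ?_)
      · exact (C.map φ).hom.continuous.comp
          ((continuous_fst.comp continuous_snd).comp continuous_subtype_val)
      · exact (ContinuousMap.continuous_postcomp (D.map φ).hom).comp
          ((continuous_snd.comp continuous_snd).comp continuous_subtype_val)⟩
  map_id m := by
    apply TopCat.ext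
    intro z
    apply Subtype.ext
    refine Prod.ext (ConcreteCategory.congr_hom (D'.map_id m) z.1.1) (Prod.ext ?_ ?_)
    · exact ConcreteCategory.congr_hom (C.map_id m) z.1.2.1
    · show (D.map (𝟙 m)).hom.comp z.1.2.2 = z.1.2.2
      apply ContinuousMap.ext
      intro t
      exact ConcreteCategory.congr_hom (D.map_id m) (z.1.2.2 t)
  map_comp {m₁ m₂ m₃} φ ψ := by
    apply TopCat.ext
    intro z
    apply Subtype.ext
    refine Prod.ext (ConcreteCategory.congr_hom (D'.map_comp φ ψ) z.1.1) (Prod.ext ?_ ?_)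
    · exact ConcreteCategory.congr_hom (C.map_comp φ ψ) z.1.2.1
    · show (D.map (φ ≫ ψ)).hom.comp z.1.2.2 = (D.map ψ).hom.comp ((D.map φ).hom.comp z.1.2.2)
      apply ContinuousMap.ext
      intro t
      exact ConcreteCategory.congr_hom (D.map_comp φ ψ) (z.1.2.2 t)

/-- The projection of the level-wise homotopy pullback onto the first factor. -/
def ssHomotopyPullbackFst {C D D' : SemiSimplicialSpace.{u}} (F : D' ⟶ D) (P : C ⟶ D) :
    ssHomotopyPullback F P ⟶ D' where
  app m := TopCat.ofHom ⟨fun z => z.1.1, continuous_fst.comp continuous_subtype_val⟩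
  naturality m₁ m₂ φ := by
    apply TopCat.ext
    intro z
    rfl

end SemiSimplicialSpace

end ReedyBlock
/-!
The replacement `Z` is built degree by degree: `Zₙ` is the mapping path space of the map
`Xₙ → Tₙ := Yₙ ×_{Y_{∂[n]}} Z_{∂[n]}`, i.e. an `n`-simplex `x` of `X` together with a path in `Tₙ`
starting at the image of `x`. Including `Xₙ` as the constant paths is a deformation retract,
hence a weak equivalence, and the endpoint map `Zₙ → Tₙ`, which is the `n`-th Reedy comparison
map of `Z → Y`, is a Serre fibration because paths can be prolonged along homotopies.

A point of `Tₙ` is recorded by its image in `Yₙ` and its `n + 1` codimension-one faces, which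
determine the whole matching family. The face maps of `Z` factor a face inclusion through a
codimension-one coface; the simplicial identities imposed on these faces make the result
independent of the factorization.
-/

universe u

section WeakEquivalence

variable {A Z : Type*} [TopologicalSpace A] [TopologicalSpace Z]

theorem IsWeakHomotopyEquiv.of_homotopyRel (i : C(A, Z)) (r : C(Z, A)) (hri : r.comp i = .id A)
    (H : (ContinuousMap.id Z).HomotopyRel (i.comp r) (Set.range i)) :
    IsWeakHomotopyEquiv i := by
  have hri_apply (a : A) : r (i a) = a := DFunLike.congr_fun hri a
  refine ⟨i.continuous, ⟨?_, ?_⟩, fun n x => ⟨?_, ?_⟩⟩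
  · rintro ⟨a⟩ ⟨b⟩ hab
    obtain ⟨γ⟩ : Joined (i a) (i b) := Quotient.exact hab
    have : Joined (r (i a)) (r (i b)) := Joined.map ⟨γ⟩ r.continuous
    exact Quotient.sound (show Joined a b by simpa only [hri_apply] using this)
  · rintro ⟨z⟩
    refine ⟨⟦r z⟧, Quotient.sound ?_⟩
    exact ⟨(Path.mk ⟨fun t => H (t, z), by fun_prop⟩ (H.apply_zero z) (H.apply_one z)).symm⟩
  · rintro ⟨a⟩ ⟨b⟩ hab
    have hK : (r.comp (i.comp a.1)).HomotopicRel (r.comp (i.comp b.1)) (Cube.boundary (Fin n)) :=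
      (Quotient.exact hab).comp_continuousMap r
    simp only [← ContinuousMap.comp_assoc, hri, ContinuousMap.id_comp] at hK
    exact Quotient.sound hK
  · rintro ⟨g⟩
    refine ⟨⟦⟨r.comp g.1, fun y hy => by simp [g.2 y hy, hri_apply]⟩⟧, Quotient.sound ?_⟩
    refine GenLoop.Homotopic.symm ⟨⟨⟨⟨fun p => H (p.1, g.1 p.2), by fun_prop⟩,
      fun y => H.apply_zero _, fun y => H.apply_one _⟩, fun t y hy => ?_⟩⟩
    simp only [ContinuousMap.coe_mk, g.2 y hy]
    exact H.eq_fst t ⟨x, rfl⟩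

end WeakEquivalence

theorem IsSerreFibration.of_injective_comp {E T T' : Type*} [TopologicalSpace E]
    [TopologicalSpace T] [TopologicalSpace T'] {q : E → T'} (hq : IsSerreFibration q)
    {p : E → T} (hp : Continuous p) {φ : C(T, T')} (hφ : Function.Injective φ)
    (hpq : ∀ e, φ (p e) = q e) : IsSerreFibration p := by
  refine ⟨hp, fun n H h hH => ?_⟩
  obtain ⟨G, hG0, hG⟩ := hq.2 n (φ.comp H) h fun a => by simp [← hpq, hH]
  exact ⟨G, hG0, fun z => hφ (by simp [hpq, hG])⟩

section MapPathSpace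

variable {A B : Type*} [TopologicalSpace A] [TopologicalSpace B]

def mapPathSpace (c : A → B) (Q : Set B) : Set (A × C(I, B)) :=
  {z | z.2 0 = c z.1 ∧ ∀ s, z.2 s ∈ Q}

namespace mapPathSpace

def incl {Q : Set B} (c : C(A, B)) (hQ : ∀ a, c a ∈ Q) : C(A, mapPathSpace c Q) :=
  ⟨fun a => ⟨(a, .const I (c a)), rfl, fun _ => hQ a⟩, by fun_prop⟩

def endpoint (c : A → B) (Q : Set B) : C(mapPathSpace c Q, Q) :=
  ⟨fun z => ⟨z.1.2 1, z.2.2 1⟩, by fun_prop⟩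

theorem isWeakHomotopyEquiv_incl {Q : Set B} (c : C(A, B)) (hQ : ∀ a, c a ∈ Q) :
    IsWeakHomotopyEquiv (incl c hQ) := by
  let r : C(mapPathSpace c Q, A) := ⟨fun z => z.1.1, by fun_prop⟩
  -- contract each path `γ` towards its starting point `c a` through `s ↦ γ (s * (1 - t))`
  let shrunk : C((I × mapPathSpace c Q) × I, B) :=
    ⟨fun q => q.1.2.1.2 (q.2 * unitInterval.symm q.1.1), by fun_prop⟩
  let shrink : C(I × mapPathSpace c Q, mapPathSpace c Q) :=
    ⟨fun p => ⟨(p.2.1.1, shrunk.curry p), by simpa [shrunk] using p.2.2.1, fun s => p.2.2.2 _⟩,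
      by fun_prop⟩
  refine IsWeakHomotopyEquiv.of_homotopyRel _ r rfl ⟨⟨shrink, fun z => ?_, fun z => ?_⟩, ?_⟩
  · ext s <;> simp [shrink, shrunk]
  · ext s
    · rfl
    · simpa [shrink, shrunk, incl, r] using z.2.1
  · rintro t _ ⟨a, rfl⟩
    ext s <;> simp [shrink, shrunk, incl]

theorem isSerreFibration_endpoint (c : A → B) (Q : Set B) :
    IsSerreFibration (endpoint c Q) := by
  refine ⟨(endpoint c Q).continuous, fun n H h hH => ?_⟩
  have hH' (a : Fin n → I) : (h a).1.2 1 = H (a, 0) := congrArg Subtype.val (hH a)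
  let clamp : ℝ → I := Set.projIcc 0 1 zero_le_one
  -- follow the path of `h a` during `[0, 1]`, then the homotopy `H (a, ·)` during `[1, 2]`
  let Γ : (Fin n → I) × ℝ → B := fun p =>
    if p.2 ≤ 1 then (h p.1).1.2 (clamp p.2) else H (p.1, clamp (p.2 - 1))
  have hΓ : Continuous Γ := by
    refine Continuous.if_le (by fun_prop) (by fun_prop) continuous_snd continuous_const ?_
    rintro ⟨a, u⟩ (rfl : u = 1)
    simpa [clamp] using hH' a
  have Γ_of_le {a : Fin n → I} {u : ℝ} (hu : u ≤ 1) : Γ (a, u) = (h a).1.2 (clamp u) := if_pos hu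
  have Γ_of_ge {a : Fin n → I} {u : ℝ} (hu : 1 ≤ u) : Γ (a, u) = H (a, clamp (u - 1)) := by
    rcases hu.eq_or_lt with rfl | hu
    · simpa [Γ, clamp] using hH' a
    · exact if_neg hu.not_ge
  let lift : C(((Fin n → I) × I) × I, B) :=
    ⟨fun q => Γ (q.1.1, q.2 * (1 + q.1.2)), by fun_prop⟩
  refine ⟨⟨fun p => ⟨((h p.1).1.1, lift.curry p), ?_, fun s => ?_⟩, by fun_prop⟩,
    fun a => ?_, fun p => ?_⟩
  · change Γ _ = _
    rw [Γ_of_le (by simp)]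
    simpa [clamp] using (h p.1).2.1
  · change Γ _ ∈ Q
    by_cases hs : (s : ℝ) * (1 + p.2) ≤ 1
    · rw [Γ_of_le hs]
      exact (h p.1).2.2 _
    · rw [Γ_of_ge (not_le.mp hs).le]
      exact (H _).2
  · refine Subtype.ext (Prod.ext rfl (ContinuousMap.ext fun s => ?_))
    change Γ _ = _
    rw [Γ_of_le (by simpa using s.2.2)]
    simp [clamp]
  · refine Subtype.ext ?_
    change Γ _ = _
    rw [Γ_of_ge (by simpa using p.2.2.1)]
    simp [clamp]

end mapPathSpace

end MapPathSpace

open CategoryTheory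

namespace SemiSimplexCat

theorem len_le_of_hom {a b : SemiSimplexCat} (α : a ⟶ b) : a.len ≤ b.len := by
  simpa using Fintype.card_le_of_injective _ α.strictMono.injective

theorem eq_id_of_hom {a : SemiSimplexCat} (α : a ⟶ a) : α = 𝟙 a :=
  hom_ext _ _ α.strictMono.eq_id

def δ {n : ℕ} (j : Fin (n + 2)) : (⟨n⟩ : SemiSimplexCat) ⟶ ⟨n + 1⟩ :=
  ⟨j.succAbove, Fin.strictMono_succAbove j⟩

theorem δ_comp_δ {n : ℕ} (j : Fin (n + 3)) (i : Fin (n + 2)) :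
    δ i ≫ δ j = δ (i.predAbove j) ≫ δ (j.succAbove i) :=
  hom_ext _ _ (funext fun k => (Fin.succAbove_succAbove_succAbove_predAbove j i k).symm)

theorem cancel_δ {m n : ℕ} {g g' : (⟨m⟩ : SemiSimplexCat) ⟶ ⟨n⟩} {j : Fin (n + 2)}
    (h : g ≫ δ j = g' ≫ δ j) : g = g' :=
  hom_ext _ _ (funext fun k => Fin.succAbove_right_injective (congrFun (congrArg Hom.toFun h) k))

theorem exists_eq_comp_δ_of_notMem_range {m n : ℕ} (α : (⟨m⟩ : SemiSimplexCat) ⟶ ⟨n + 1⟩)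
    {j : Fin (n + 2)} (hj : j ∉ Set.range α.toFun) : ∃ g, α = g ≫ δ j := by
  choose g hg using fun k => Fin.exists_succAbove_eq fun h => hj ⟨k, h⟩
  refine ⟨⟨g, fun a b hab => ?_⟩, hom_ext _ _ (funext fun k => (hg k).symm)⟩
  have := α.strictMono hab
  rw [← hg a, ← hg b] at this
  exact Fin.succAbove_lt_succAbove_iff.mp this

theorem exists_eq_comp_δ {m n : ℕ} (α : (⟨m⟩ : SemiSimplexCat) ⟶ ⟨n + 1⟩) (hmn : m ≤ n) :
    ∃ j g, α = g ≫ δ j := by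
  obtain ⟨j, hj⟩ : ∃ j, j ∉ Set.range α.toFun := by
    by_contra! h
    have := Fintype.card_le_of_surjective _ fun j => h j
    simp only [Fintype.card_fin] at this
    omega
  exact ⟨j, exists_eq_comp_δ_of_notMem_range α hj⟩

theorem hom_induction
    {motive : ∀ {m n : ℕ}, ((⟨m⟩ : SemiSimplexCat) ⟶ ⟨n⟩) → Prop}
    (id : ∀ n, motive (𝟙 (⟨n⟩ : SemiSimplexCat)))
    (comp_δ : ∀ {m n : ℕ} (g : (⟨m⟩ : SemiSimplexCat) ⟶ ⟨n⟩) (j : Fin (n + 2)),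
      motive g → motive (g ≫ δ j)) :
    ∀ {m n : ℕ} (α : (⟨m⟩ : SemiSimplexCat) ⟶ ⟨n⟩), motive α
  | m, 0, α => by
    obtain rfl : m = 0 := Nat.le_zero.mp (len_le_of_hom α)
    exact eq_id_of_hom α ▸ id 0
  | m, n + 1, α => by
    rcases (len_le_of_hom α).eq_or_lt with h | h
    · subst h
      exact eq_id_of_hom α ▸ id _
    · obtain ⟨j, g, rfl⟩ := exists_eq_comp_δ α (Nat.le_of_lt_succ h)
      exact comp_δ g j (hom_induction id comp_δ g)

theorem exists_eq_succAbove_of_comp_δ_eq {m n : ℕ} {g g' : (⟨m⟩ : SemiSimplexCat) ⟶ ⟨n⟩}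
    {j j' : Fin (n + 2)} (h : g ≫ δ j = g' ≫ δ j') (hne : j ≠ j') :
    ∃ i, j = j'.succAbove i ∧ i ∉ Set.range g'.toFun := by
  obtain ⟨i, rfl⟩ := Fin.exists_succAbove_eq hne
  refine ⟨i, rfl, ?_⟩
  rintro ⟨k, hk⟩
  have : (j'.succAbove i).succAbove (g.toFun k) = j'.succAbove (g'.toFun k) :=
    congrFun (congrArg Hom.toFun h) k
  exact Fin.succAbove_ne _ (g.toFun k) (by rw [this, hk])

end SemiSimplexCat

namespace SemiSimplicialSpace

open SemiSimplexCat Opposite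

variable {X Y : SemiSimplicialSpace.{u}}

theorem continuous_reedyCompare (P : X ⟶ Y) (n : ℕ) : Continuous (reedyCompare P n) :=
  Continuous.subtype_mk ((P.app _).hom.continuous.prodMk (Continuous.subtype_mk
    (continuous_pi fun p : FaceIndex n => (X.map p.1.2.op).hom.continuous) _)) _

def codimOneFace {n : ℕ} (j : Fin (n + 2)) : FaceIndex (n + 1) := ⟨⟨n, δ j⟩, n.lt_succ_self⟩

theorem MatchingObj.ext_codimOneFace {n : ℕ} {u v : MatchingObj X (n + 1)}
    (h : ∀ j, u.1 (codimOneFace j) = v.1 (codimOneFace j)) : u = v := by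
  refine Subtype.ext (funext fun ⟨⟨k, α⟩, hk⟩ => ?_)
  obtain ⟨j, g, rfl⟩ := exists_eq_comp_δ α (Nat.le_of_lt_succ hk)
  exact (u.2 (codimOneFace j) k g hk).symm.trans ((h j) ▸ v.2 (codimOneFace j) k g hk)

end SemiSimplicialSpace

namespace ReedyReplacement

open SemiSimplexCat Opposite SemiSimplicialSpace

variable (X Y : SemiSimplicialSpace.{u})

/-- A model of `Yₙ ×_{Y_{∂[n]}} Z_{∂[n]}`: in degree `n + 1`, a point of `Yₙ₊₁` together with its
`n + 2` codimension-one faces, taken as raw points of degree `n`; the conditions singling out the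
points of `Z` and the compatible families among them are imposed afterwards by `admissible`. -/
def Target : ℕ → TopCat.{u}
  | 0 => Y.obj (op ⟨0⟩)
  | n + 1 => TopCat.of (Y.obj (op ⟨n + 1⟩) × (Fin (n + 2) → X.obj (op ⟨n⟩) × C(I, Target n)))

abbrev RawPoint (n : ℕ) : Type u := X.obj (op ⟨n⟩) × C(I, Target X Y n)

def base : ∀ n, C(Target X Y n, Y.obj (op ⟨n⟩))
  | 0 => .id _
  | _ + 1 => .fst

variable {X Y}

def rawFace {n : ℕ} (j : Fin (n + 2)) : C(RawPoint X Y (n + 1), RawPoint X Y n) :=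
  ⟨fun z => (z.2 1).2 j, by fun_prop⟩

def FacesCompatible : ∀ n, (Fin (n + 2) → RawPoint X Y n) → Prop
  | 0, _ => True
  | _ + 1, u => ∀ j i, rawFace i (u j) = rawFace (i.predAbove j) (u (j.succAbove i))

variable (P : X ⟶ Y)

def targetMap : ∀ n, C(X.obj (op ⟨n⟩), Target X Y n)
  | 0 => (P.app (op ⟨0⟩)).hom
  | n + 1 => ⟨fun x => (P.app _ x, fun j =>
      (X.map (δ j).op x, .const I (targetMap n (X.map (δ j).op x)))), by fun_prop⟩

def admissible : ∀ n, Set (Target X Y n)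
  | 0 => Set.univ
  | n + 1 => {b | (∀ j, b.2 j ∈ mapPathSpace (targetMap P n) (admissible n) ∧
      base X Y n ((b.2 j).2 1) = Y.map (δ j).op b.1) ∧ FacesCompatible n b.2}

abbrev Obj (n : ℕ) : Type u := mapPathSpace (targetMap P n) (admissible P n)

theorem base_targetMap : ∀ n x, base X Y n (targetMap P n x) = P.app (op ⟨n⟩) x
  | 0, _ => rfl
  | _ + 1, _ => rfl

theorem targetMap_mem_admissible : ∀ n x, targetMap P n x ∈ admissible P n
  | 0, _ => trivial
  | n + 1, x => by
    refine ⟨fun j => ⟨⟨rfl, fun _ => targetMap_mem_admissible n _⟩, ?_⟩, ?_⟩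
    · exact (base_targetMap P n _).trans (naturality_apply P (δ j) x)
    · cases n with
      | zero => trivial
      | succ n =>
        intro j i
        change (X.map (δ i).op (X.map (δ j).op x), _) = (X.map (δ _).op (X.map (δ _).op x), _)
        rw [map_map, map_map, δ_comp_δ]

def incl (n : ℕ) : C(X.obj (op ⟨n⟩), Obj P n) :=
  mapPathSpace.incl (targetMap P n) (targetMap_mem_admissible P n)

variable {P}

def face {n : ℕ} (j : Fin (n + 2)) : C(Obj P (n + 1), Obj P n) :=
  ⟨fun z => ⟨rawFace j z.1, ((z.2.2 1).1 j).1⟩, by fun_prop⟩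

theorem face_face {n : ℕ} (z : Obj P (n + 2)) (j : Fin (n + 3)) (i : Fin (n + 2)) :
    face i (face j z) = face (i.predAbove j) (face (j.succAbove i) z) :=
  Subtype.ext ((z.2.2 1).2 j i)

variable (P)

def proj (n : ℕ) : C(Obj P n, Y.obj (op ⟨n⟩)) :=
  (base X Y n).comp ⟨fun z => z.1.2 1, by fun_prop⟩

variable {P}

theorem proj_face {n : ℕ} (z : Obj P (n + 1)) (j : Fin (n + 2)) :
    proj P n (face j z) = Y.map (δ j).op (proj P (n + 1) z) :=
  ((z.2.2 1).1 j).2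

def castObj {n m : ℕ} (h : n = m) : C(Obj P n, Obj P m) := h ▸ .id _

noncomputable def map : ∀ {n m : ℕ}, ((⟨m⟩ : SemiSimplexCat) ⟶ ⟨n⟩) → C(Obj P n, Obj P m)
  | 0, _, α => castObj (Nat.le_zero.mp (len_le_of_hom α)).symm
  | n + 1, m, α =>
    if h : m = n + 1 then castObj h.symm
    else
      have hα := exists_eq_comp_δ α (Nat.le_of_lt_succ ((len_le_of_hom α).lt_of_ne h))
      (map hα.choose_spec.choose).comp (face hα.choose)

theorem map_id : ∀ n, map (P := P) (𝟙 (⟨n⟩ : SemiSimplexCat)) = .id _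
  | 0 => rfl
  | n + 1 => by rw [map, dif_pos rfl]; rfl

theorem exists_map_eq_comp_face {m n : ℕ} (α : (⟨m⟩ : SemiSimplexCat) ⟶ ⟨n + 1⟩) (hmn : m ≤ n) :
    ∃ j g, α = g ≫ δ j ∧ map (P := P) α = (map g).comp (face j) := by
  have h : m ≠ n + 1 := by omega
  rw [map, dif_neg h]
  have hα := exists_eq_comp_δ α (Nat.le_of_lt_succ ((len_le_of_hom α).lt_of_ne h))
  exact ⟨_, _, hα.choose_spec.choose_spec, rfl⟩

theorem map_comp_δ {m n : ℕ} (g : (⟨m⟩ : SemiSimplexCat) ⟶ ⟨n⟩) (j : Fin (n + 2)) :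
    map (P := P) (g ≫ δ j) = (map g).comp (face j) := by
  induction n using Nat.strong_induction_on generalizing m with
  | _ n ih =>
    obtain ⟨j₀, g₀, hfac, hmap⟩ := exists_map_eq_comp_face (P := P) (g ≫ δ j) (len_le_of_hom g)
    rw [hmap]
    rcases eq_or_ne j₀ j with rfl | hne
    · rw [cancel_δ hfac.symm]
    -- two factorizations through different cofaces have a common refinement
    obtain ⟨i, rfl, hi⟩ := exists_eq_succAbove_of_comp_δ_eq hfac.symm hne
    cases n with
    | zero => exact absurd ⟨0, Subsingleton.elim (α := Fin 1) _ _⟩ hi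
    | succ k =>
      obtain ⟨f, rfl⟩ := exists_eq_comp_δ_of_notMem_range g hi
      have hg₀ : g₀ = f ≫ δ (i.predAbove j) := by
        apply cancel_δ (j := j.succAbove i)
        rw [← hfac, Category.assoc, Category.assoc, δ_comp_δ]
      subst hg₀
      ext1 z
      simp only [ih k k.lt_succ_self, ContinuousMap.comp_apply]
      rw [face_face z j i]

theorem map_δ {n : ℕ} (j : Fin (n + 2)) : map (P := P) (δ j) = face j := by
  rw [← Category.id_comp (δ j), map_comp_δ, map_id, ContinuousMap.id_comp]

theorem map_comp {k m n : ℕ} (f : (⟨k⟩ : SemiSimplexCat) ⟶ ⟨m⟩)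
    (g : (⟨m⟩ : SemiSimplexCat) ⟶ ⟨n⟩) :
    map (P := P) (f ≫ g) = (map f).comp (map g) := by
  induction g using hom_induction generalizing k with
  | id n => rw [Category.comp_id, map_id, ContinuousMap.comp_id]
  | comp_δ g j ih => rw [← Category.assoc, map_comp_δ, ih, map_comp_δ, ContinuousMap.comp_assoc]

variable (P) in
theorem map_incl {m n : ℕ} (α : (⟨m⟩ : SemiSimplexCat) ⟶ ⟨n⟩) (x : X.obj (op ⟨n⟩)) :
    map α (incl P n x) = incl P m (X.map α.op x) := by
  induction α using hom_induction with
  | id n => simp [map_id]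
  | comp_δ g j ih => rw [map_comp_δ, ContinuousMap.comp_apply, ← map_map, ← ih]; rfl

theorem proj_map {m n : ℕ} (α : (⟨m⟩ : SemiSimplexCat) ⟶ ⟨n⟩) (z : Obj P n) :
    proj P m (map α z) = Y.map α.op (proj P n z) := by
  induction α using hom_induction with
  | id n => simp [map_id]
  | comp_δ g j ih => rw [map_comp_δ, ContinuousMap.comp_apply, ih, proj_face, map_map]

variable (P)

noncomputable def replacement : SemiSimplicialSpace.{u} where
  obj a := TopCat.of (Obj P a.unop.len)
  map φ := TopCat.ofHom (map φ.unop)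
  map_id a := congrArg TopCat.ofHom (map_id a.unop.len)
  map_comp φ ψ := congrArg TopCat.ofHom (map_comp ψ.unop φ.unop)

noncomputable def inclusion : X ⟶ replacement P where
  app a := TopCat.ofHom (incl P a.unop.len)
  naturality _ _ φ := TopCat.ext fun x => (map_incl P φ.unop x).symm

noncomputable def projection : replacement P ⟶ Y where
  app a := TopCat.ofHom (proj P a.unop.len)
  naturality _ _ φ := TopCat.ext fun z => proj_map φ.unop z

theorem inclusion_comp_projection : inclusion P ≫ projection P = P := by
  ext a x
  exact base_targetMap P a.unop.len x

theorem isLevelEquiv_inclusion : IsLevelEquiv (inclusion P) := fun n =>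
  mapPathSpace.isWeakHomotopyEquiv_incl (targetMap P n) (targetMap_mem_admissible P n)

def toTarget : ∀ n, C(ReedyTarget (projection P) n, Target X Y n)
  | 0 => ⟨fun w => w.1.1, by fun_prop⟩
  | n + 1 => ⟨fun w => (w.1.1, fun j => (w.1.2.1 (codimOneFace j)).1),
      (continuous_fst.comp continuous_subtype_val).prodMk (continuous_pi fun j =>
        continuous_subtype_val.comp ((continuous_apply _).comp
          (continuous_subtype_val.comp (continuous_snd.comp continuous_subtype_val))))⟩

theorem toTarget_injective : ∀ n, Function.Injective (toTarget P n)
  | 0, _, _, h =>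
    Subtype.ext (Prod.ext h (Subtype.ext (funext fun p => absurd p.2 p.1.1.not_lt_zero)))
  | _ + 1, _, _, h => Subtype.ext (Prod.ext (Prod.ext_iff.mp h).1 (MatchingObj.ext_codimOneFace
      fun j => Subtype.ext (congrFun (Prod.ext_iff.mp h).2 j)))

theorem toTarget_reedyCompare : ∀ n (z : Obj P n),
    toTarget P n (reedyCompare (projection P) n z) = z.1.2 1
  | 0, _ => rfl
  | _ + 1, z => Prod.ext rfl (funext fun j => congrArg Subtype.val (DFunLike.congr_fun (map_δ j) z))

theorem toTarget_mem_admissible : ∀ n w, toTarget P n w ∈ admissible P n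
  | 0, _ => trivial
  | n + 1, w => by
    refine ⟨fun j => ⟨(w.1.2.1 (codimOneFace j)).2,
      congrFun (congrArg Subtype.val w.2) (codimOneFace j)⟩, ?_⟩
    cases n with
    | zero => trivial
    | succ n =>
      intro j i
      have face_eq (j : Fin (n + 3)) (i : Fin (n + 2)) : face i (w.1.2.1 (codimOneFace j)) =
          w.1.2.1 ⟨⟨n, δ i ≫ δ j⟩, show n < n + 2 by omega⟩ := by
        rw [← map_δ]
        exact w.1.2.2 (codimOneFace j) n (δ i) _
      refine congrArg Subtype.val ((face_eq j i).trans (.trans ?_ (face_eq _ _).symm))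
      rw [δ_comp_δ]

theorem isReedyFibration_projection : IsReedyFibration (projection P) := fun n =>
  (mapPathSpace.isSerreFibration_endpoint (targetMap P n) (admissible P n)).of_injective_comp
    (continuous_reedyCompare _ n)
    (φ := ⟨fun w => ⟨toTarget P n w, toTarget_mem_admissible P n w⟩, by fun_prop⟩)
    (fun _ _ h => toTarget_injective P n (congrArg Subtype.val h))
    (fun z => Subtype.ext (toTarget_reedyCompare P n z))

end ReedyReplacement

open CategoryTheory SemiSimplexCat Opposite SemiSimplicialSpace in
/-- **Reedy fibrant replacement.**
Every map of semi-simplicial spaces factors as a level equivalence followed by a Reedy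
fibration. -/
theorem reedy_factorization {X Y : SemiSimplicialSpace.{0}} (P : X ⟶ Y) :
    ∃ (Z : SemiSimplicialSpace.{0}) (i : X ⟶ Z) (q : Z ⟶ Y),
      IsLevelEquiv i ∧ IsReedyFibration q ∧ i ≫ q = P :=
  ⟨ReedyReplacement.replacement P, ReedyReplacement.inclusion P, ReedyReplacement.projection P,
    ReedyReplacement.isLevelEquiv_inclusion P, ReedyReplacement.isReedyFibration_projection P,
    ReedyReplacement.inclusion_comp_projection P⟩
end

section
/- Let G• be a simplicial group acting simplicially on a simplicial set X•, such that the action of Gₙ on Xₙ is free for every n, and let (X/G)• be the level-wise quotient simplicial set. Then the projection X• → (X/G)• is a Kan fibration. -/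
open scoped unitInterval Topology.Homotopy

/-! ### Simplicial group actions and Kan fibrations -/

noncomputable section SimplicialGroupKan

open CategoryTheory Simplicial SSet Opposite

/-- A solution to the lifting problem given by a horn `u` in `X` over a filler `sy` in `Y`. -/
def HornLiftExists {X Y : SSet} (p : X ⟶ Y) (n : ℕ) (i : Fin (n + 1))
    (u : (Λ[n, i] : SSet) ⟶ X) (sy : Δ[n] ⟶ Y) : Prop :=
  ∃ l : Δ[n] ⟶ X, Λ[n, i].ι ≫ l = u ∧ l ≫ p = sy

/-- Kan fibrations: maps with the right lifting property against all horn inclusions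
`Λ[n, i] ⊆ Δ[n]`, `n ≥ 1`, `0 ≤ i ≤ n`. -/
def IsKanFibration {X Y : SSet} (p : X ⟶ Y) : Prop :=
  ∀ (n : ℕ) (i : Fin (n + 2)) (u : (Λ[n + 1, i] : SSet) ⟶ X) (sy : Δ[n + 1] ⟶ Y),
    u ≫ p = Λ[n + 1, i].ι ≫ sy → HornLiftExists p (n + 1) i u sy

/-- A simplicial group acting simplicially on a simplicial set `X`:
a group structure on each level of a simplicial set of "group elements" together with a
levelwise group action compatible with the simplicial structure maps. -/
structure SimplicialGroupAction (X : SSet.{0}) where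
  /-- the simplicial group -/
  G : SimplexCategoryᵒᵖ ⥤ GrpCat.{0}
  /-- the levelwise action -/
  act : ∀ m : SimplexCategoryᵒᵖ, (G.obj m) → X.obj m → X.obj m
  one_act : ∀ m (x : X.obj m), act m 1 x = x
  mul_act : ∀ m (g g' : G.obj m) (x : X.obj m), act m (g * g') x = act m g (act m g' x)
  map_act : ∀ {m₁ m₂ : SimplexCategoryᵒᵖ} (φ : m₁ ⟶ m₂) (g : G.obj m₁) (x : X.obj m₁),
    X.map φ (act m₁ g x) = act m₂ (G.map φ g) (X.map φ x)

namespace SimplicialGroupAction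

variable {X : SSet.{0}} (A : SimplicialGroupAction X)

/-- The levelwise orbit equivalence relation. -/
def orbitSetoid (m : SimplexCategoryᵒᵖ) : Setoid (X.obj m) where
  r x y := ∃ g : A.G.obj m, A.act m g x = y
  iseqv := by
    constructor
    · intro x; exact ⟨1, A.one_act m x⟩
    · rintro x y ⟨g, rfl⟩
      refine ⟨g⁻¹, ?_⟩
      rw [← A.mul_act, inv_mul_cancel, A.one_act]
    · rintro x y z ⟨g, rfl⟩ ⟨g', rfl⟩
      exact ⟨g' * g, A.mul_act m g' g x⟩

/-- The levelwise quotient simplicial set `X/G`. -/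
def quotient : SSet.{0} where
  obj m := Quotient (A.orbitSetoid m)
  map {m₁ m₂} φ := TypeCat.ofHom (Quotient.map (X.map φ)
    (by rintro x y ⟨g, rfl⟩; exact ⟨A.G.map φ g, (A.map_act φ g x).symm⟩))
  map_id m := by
    ext z
    induction z using Quotient.inductionOn with
    | h x =>
      have hx : X.map (𝟙 m) x = x := by simp
      show Quotient.mk (A.orbitSetoid m) (X.map (𝟙 m) x) = Quotient.mk (A.orbitSetoid m) x
      rw [hx]
  map_comp {m₁ m₂ m₃} φ ψ := by
    ext z
    induction z using Quotient.inductionOn with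
    | h x =>
      have hx : X.map (φ ≫ ψ) x = X.map ψ (X.map φ x) := by
        rw [X.map_comp]; rfl
      show Quotient.mk (A.orbitSetoid m₃) (X.map (φ ≫ ψ) x)
        = Quotient.mk (A.orbitSetoid m₃) (X.map ψ (X.map φ x))
      rw [hx]

/-- The projection `X → X/G`. -/
def proj : X ⟶ A.quotient where
  app m := TypeCat.ofHom fun x => Quotient.mk (A.orbitSetoid m) x
  naturality m₁ m₂ φ := rfl

end SimplicialGroupAction


/-! A horn `u` in `X` over an `(n+1)`-simplex `[e]` of `X/G` has faces `u_j = g_j • d_j e`,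
since `u_j` and `d_j e` have the same image in `X/G`. Freeness makes the `g_j` unique, so they
inherit the compatibility of the faces of `u` and form a horn in the simplicial group `G`.
Simplicial groups are Kan (Moore): starting from `1`, correct the faces in the order
`0, …, i - 1, n + 1, …, i + 1`, multiplying the current `w` by a degeneracy `s ((d_r w)⁻¹ * g_r)`
of the error at face `r`, where `s` collapses `r` with its neighbour towards `i`; this neighbour
is never among the faces already corrected, so they stay untouched. If `g` fills the horn of the
`g_j`, then `g • e` fills `u` and lies over `[e]`. -/

universe u

namespace SimplexCategory

lemma δ_comp_σ_comp_δ_castSucc_apply_ne {n : ℕ} {a : Fin (n + 1)} {j : Fin (n + 2)}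
    (h : j ≠ a.succ) (b : Fin (n + 1)) :
    (δ j ≫ SimplexCategory.σ a ≫ δ a.castSucc).toOrderHom b ≠ j := by
  simp only [δ, mkHom, SimplexCategory.σ, comp_toOrderHom, Hom.toOrderHom_mk, OrderHom.comp_coe,
    OrderEmbedding.toOrderHom_coe, Function.comp_apply, Fin.succAboveOrderEmb_apply,
    Fin.predAboveOrderHom_coe]
  by_cases hb : j.succAbove b = a.castSucc
  · rw [hb, Fin.predAbove_castSucc_self, Fin.succAbove_castSucc_self]
    exact h.symm
  · rw [Fin.succAbove_predAbove hb]
    exact Fin.succAbove_ne j b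

lemma δ_comp_σ_comp_δ_succ_apply_ne {n : ℕ} {a : Fin (n + 1)} {j : Fin (n + 2)}
    (h : j ≠ a.castSucc) (b : Fin (n + 1)) :
    (δ j ≫ SimplexCategory.σ a ≫ δ a.succ).toOrderHom b ≠ j := by
  simp only [δ, mkHom, SimplexCategory.σ, comp_toOrderHom, Hom.toOrderHom_mk, OrderHom.comp_coe,
    OrderEmbedding.toOrderHom_coe, Function.comp_apply, Fin.succAboveOrderEmb_apply,
    Fin.predAboveOrderHom_coe]
  by_cases hb : j.succAbove b = a.succ
  · rw [hb, Fin.predAbove_succ_self, Fin.succAbove_succ_self]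
    exact h.symm
  · rw [Fin.succ_succAbove_predAbove hb]
    exact Fin.succAbove_ne j b

end SimplexCategory

namespace SimplicialGroup

open SimplexCategory

variable (G : SimplexCategoryᵒᵖ ⥤ GrpCat.{u}) {n : ℕ} {i : Fin (n + 2)}

def HornCompatible (x : ∀ j : Fin (n + 2), j ≠ i → G _⦋n⦌) : Prop :=
  ∀ ⦃k : SimplexCategory⦄ (φ ψ : k ⟶ ⦋n⦌) (j l : Fin (n + 2)) (hj : j ≠ i) (hl : l ≠ i),
    φ ≫ δ j = ψ ≫ δ l → G.map φ.op (x j hj) = G.map ψ.op (x l hl)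

variable {G}

def IsFillerOn (x : ∀ j : Fin (n + 2), j ≠ i → G _⦋n⦌) (S : Set (Fin (n + 2)))
    (w : G _⦋n + 1⦌) : Prop :=
  ∀ j (hj : j ≠ i), j ∈ S → G.map (δ j).op w = x j hj

lemma IsFillerOn.mono {x : ∀ j : Fin (n + 2), j ≠ i → G _⦋n⦌} {S T : Set (Fin (n + 2))}
    {w : G _⦋n + 1⦌} (hw : IsFillerOn x S w) (hTS : T ⊆ S) : IsFillerOn x T w :=
  fun j hj hjT => hw j hj (hTS hjT)

namespace HornCompatible

variable {x : ∀ j : Fin (n + 2), j ≠ i → G _⦋n⦌} (hx : HornCompatible G x)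
include hx

lemma map_inv_mul_eq_one {w : G _⦋n + 1⦌} {r j : Fin (n + 2)} (hr : r ≠ i) (hj : j ≠ i)
    (hw : G.map (δ j).op w = x j hj) {k : SimplexCategory} (f : k ⟶ ⦋n⦌)
    (hf : ∀ b, (f ≫ δ r).toOrderHom b ≠ j) :
    G.map f.op ((G.map (δ r).op w)⁻¹ * x r hr) = 1 := by
  obtain ⟨ψ, hψ⟩ := eq_comp_δ_of_not_surjective' (f ≫ δ r) j hf
  rw [map_mul, map_inv, ← Functor.map_comp_apply, ← op_comp, hψ, op_comp,
    Functor.map_comp_apply, hw, hx f ψ r j hr hj hψ, inv_mul_cancel]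

lemma exists_isFillerOn_insert {S : Set (Fin (n + 2))} {w : G _⦋n + 1⦌}
    (hw : IsFillerOn x S w) {r : Fin (n + 2)} (hr : r ≠ i) (s : ⦋n + 1⦌ ⟶ ⦋n⦌)
    (hs : δ r ≫ s = 𝟙 _) (hS : ∀ j ∈ S, ∀ b, (δ j ≫ s ≫ δ r).toOrderHom b ≠ j) :
    ∃ w', IsFillerOn x (insert r S) w' := by
  refine ⟨w * G.map s.op ((G.map (δ r).op w)⁻¹ * x r hr), fun j hj hjS => ?_⟩
  rw [map_mul, ← Functor.map_comp_apply, ← op_comp]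
  obtain rfl | hjS := hjS
  · rw [hs, op_id, G.map_id, GrpCat.id_apply, mul_inv_cancel_left]
  · rw [hx.map_inv_mul_eq_one hr hj (hw j hj hjS) (δ j ≫ s) (by simpa using hS j hjS),
      mul_one, hw j hj hjS]

lemma exists_isFillerOn_val_lt (a : ℕ) (ha : a ≤ i.val) :
    ∃ w, IsFillerOn x {j | j.val < a} w := by
  induction a with
  | zero => exact ⟨1, fun j _ hja => absurd hja (Nat.not_lt_zero _)⟩
  | succ a ih =>
    obtain ⟨w, hw⟩ := ih (by omega)
    let c : Fin (n + 1) := ⟨a, by omega⟩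
    obtain ⟨w', hw'⟩ := hx.exists_isFillerOn_insert hw (r := c.castSucc) (by grind)
      (SimplexCategory.σ c) δ_comp_σ_self
      (fun j _ => δ_comp_σ_comp_δ_castSucc_apply_ne (by grind))
    exact ⟨w', hw'.mono fun j _ => by grind⟩

lemma exists_isFillerOn_lt_or_lt (d : ℕ) (hd : d ≤ n + 1 - i.val) :
    ∃ w, IsFillerOn x {j | j < i ∨ n + 1 - d < j.val} w := by
  induction d with
  | zero =>
    obtain ⟨w, hw⟩ := hx.exists_isFillerOn_val_lt i.val le_rfl
    exact ⟨w, hw.mono fun j _ => by grind⟩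
  | succ d ih =>
    obtain ⟨w, hw⟩ := ih (by omega)
    let c : Fin (n + 1) := ⟨n - d, by omega⟩
    obtain ⟨w', hw'⟩ := hx.exists_isFillerOn_insert hw (r := c.succ) (by grind)
      (SimplexCategory.σ c) δ_comp_σ_succ
      (fun j _ => δ_comp_σ_comp_δ_succ_apply_ne (by grind))
    exact ⟨w', hw'.mono fun j _ => by grind⟩

theorem exists_filler : ∃ g : G _⦋n + 1⦌, ∀ j (hj : j ≠ i), G.map (δ j).op g = x j hj := by
  obtain ⟨w, hw⟩ := hx.exists_isFillerOn_lt_or_lt (n + 1 - i.val) le_rfl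
  exact ⟨w, fun j hj => hw j hj (by grind)⟩

end HornCompatible

end SimplicialGroup

namespace SSet.horn

lemma map_yonedaEquiv_ι_comp {X : SSet.{u}} {n : ℕ} {i : Fin (n + 2)}
    (f : (Λ[n + 1, i] : SSet) ⟶ X) {k : SimplexCategory} (φ ψ : k ⟶ ⦋n⦌) {j l : Fin (n + 2)}
    (hj : j ≠ i) (hl : l ≠ i) (h : φ ≫ SimplexCategory.δ j = ψ ≫ SimplexCategory.δ l) :
    X.map φ.op (yonedaEquiv (horn.ι i j hj ≫ f)) =
      X.map ψ.op (yonedaEquiv (horn.ι i l hl ≫ f)) := by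
  rw [yonedaEquiv_naturality, yonedaEquiv_naturality, ← Category.assoc, ← Category.assoc]
  congr 2
  rw [← cancel_mono Λ[n + 1, i].ι, Category.assoc, Category.assoc, horn.ι_ι, horn.ι_ι,
    CosimplicialObject.δ, CosimplicialObject.δ, ← stdSimplex.map_comp, ← stdSimplex.map_comp, h]

end SSet.horn

namespace SimplicialGroupAction

variable {X : SSet.{0}} (A : SimplicialGroupAction X)

lemma proj_app_surjective (m : SimplexCategoryᵒᵖ) : Function.Surjective (A.proj.app m) :=
  fun q => Quotient.exists_rep q

lemma exists_act_eq_of_proj_app_eq {m : SimplexCategoryᵒᵖ} {x y : X.obj m}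
    (h : A.proj.app m x = A.proj.app m y) : ∃ g, A.act m g x = y :=
  Quotient.exact h

lemma proj_app_act (m : SimplexCategoryᵒᵖ) (g : A.G.obj m) (x : X.obj m) :
    A.proj.app m (A.act m g x) = A.proj.app m x :=
  (Quotient.sound (s := A.orbitSetoid m) ⟨g, rfl⟩).symm

lemma act_left_injective {m : SimplexCategoryᵒᵖ}
    (hfree : ∀ (g : A.G.obj m) (x : X.obj m), A.act m g x = x → g = 1) (x : X.obj m) :
    Function.Injective (fun g => A.act m g x) := by
  intro g g' h
  have hfix : A.act m (g'⁻¹ * g) x = x := by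
    simp only at h
    rw [A.mul_act, h, ← A.mul_act, inv_mul_cancel, A.one_act]
  rw [← inv_mul_eq_one.mp (hfree _ x hfix)]

lemma exists_act_δ_eq {n : ℕ} {i : Fin (n + 2)} {u : (Λ[n + 1, i] : SSet) ⟶ X}
    {sy : Δ[n + 1] ⟶ A.quotient} (hcomm : u ≫ A.proj = Λ[n + 1, i].ι ≫ sy) {e : X _⦋n + 1⦌}
    (he : A.proj.app _ e = yonedaEquiv sy) (j : Fin (n + 2)) (hj : j ≠ i) :
    ∃ g, A.act _ g (X.δ j e) = yonedaEquiv (horn.ι i j hj ≫ u) := by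
  apply A.exists_act_eq_of_proj_app_eq
  rw [← yonedaEquiv_comp, Category.assoc, hcomm, horn.ι_ι_assoc, stdSimplex.yonedaEquiv_δ_comp,
    ← he]
  rfl

lemma hornCompatible_of_act_δ_eq
    (hfree : ∀ (m : SimplexCategoryᵒᵖ) (g : A.G.obj m) (x : X.obj m), A.act m g x = x → g = 1)
    {n : ℕ} {i : Fin (n + 2)} (u : (Λ[n + 1, i] : SSet) ⟶ X) {e : X _⦋n + 1⦌}
    {g : ∀ j : Fin (n + 2), j ≠ i → A.G _⦋n⦌}
    (hg : ∀ j hj, A.act _ (g j hj) (X.δ j e) = yonedaEquiv (horn.ι i j hj ≫ u)) :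
    SimplicialGroup.HornCompatible A.G g := by
  intro k φ ψ j l hj hl h
  have he : X.map φ.op (X.δ j e) = X.map ψ.op (X.δ l e) := by
    simp only [SimplicialObject.δ, ← Functor.map_comp_apply, ← op_comp, h]
  apply A.act_left_injective (hfree _) (X.map φ.op (X.δ j e))
  simp only
  rw [← A.map_act, hg, he, ← A.map_act, hg, horn.map_yonedaEquiv_ι_comp u φ ψ hj hl h]

end SimplicialGroupAction

/-- **Free simplicial group actions yield Kan fibrations.**
If a simplicial group `G` acts simplicially on a simplicial set `X` and the action of each
`Gₙ` on `Xₙ` is free, then the projection `X → X/G` to the levelwise quotient is a Kan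
fibration. -/
theorem kanFibration_of_free_simplicialGroupAction
    {X : SSet.{0}} (A : SimplicialGroupAction X)
    (hfree : ∀ (m : SimplexCategoryᵒᵖ) (g : A.G.obj m) (x : X.obj m),
      A.act m g x = x → g = 1) :
    IsKanFibration A.proj := by
  intro n i u sy hcomm
  obtain ⟨e, he⟩ := A.proj_app_surjective _ (yonedaEquiv sy)
  choose g hg using A.exists_act_δ_eq hcomm he
  obtain ⟨gg, hgg⟩ := (A.hornCompatible_of_act_δ_eq hfree u hg).exists_filler
  refine ⟨yonedaEquiv.symm (A.act _ gg e), horn.hom_ext' fun j hj => ?_, ?_⟩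
  · rw [horn.ι_ι_assoc, stdSimplex.δ_comp_yonedaEquiv_symm, SimplicialObject.δ, A.map_act, hgg,
      ← SimplicialObject.δ, hg, Equiv.symm_apply_apply]
  · rw [yonedaEquiv_symm_comp, A.proj_app_act, he, Equiv.symm_apply_apply]

end SimplicialGroupKan
end
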